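/- In the Hopf algebra H of rooted trees (the free commutative algebra on isomorphism classes of rooted trees, graded by number of vertices), the grafting operator B₊, defined by B₊(t₁⋯t_n) = the tree obtained by attaching the roots of t₁,...,t_n to a new root (and B₊(𝟙) = the one-vertex tree •), satisfies the Hochschild 1-cocycle identity: Δ ∘ B₊ = (id ⊗ B₊) ∘ Δ + B₊ ⊗ 𝟙. -/
import Mathlib


open MvPolynomial TensorProduct

/-- Rooted trees: a root together with a list of subtrees. -/
inductive RT : Type
  | node : List RT → RT

/-- The free commutative algebra generated by rooted trees. -/
abbrev HCK : Type := MvPolynomial RT ℚ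

mutual
/-- All ways of choosing, for each child of a vertex, either to cut the edge to that
child (the child then joins the pruned part) or to perform an admissible cut (possibly
empty) inside the child; returns the pruned part (a forest, as a monomial in `HCK`)
and the list of surviving children. -/
noncomputable def childChoices : List RT → List (HCK × List RT)
  | [] => [(1, [])]
  | c :: rest =>
      ((childChoices rest).map fun pr => (X c * pr.1, pr.2)) ++
      ((allCuts c).flatMap fun qs =>
        (childChoices rest).map fun pr => (qs.1 * pr.1, qs.2 :: pr.2))
/-- All admissible cuts of a rooted tree (including the empty cut), each given by its
pruned part `P_c` (a forest) and its root part `R_c` (a tree). -/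
noncomputable def allCuts : RT → List (HCK × RT)
  | .node l => (childChoices l).map fun pr =>
      (pr.1, .node (Multiset.toList (↑pr.2 : Multiset RT)))
end

/-- The coproduct on a single generator (tree) `t`, by the admissible-cut formula
`Δ(t) = t ⊗ 𝟙 + Σ_{cuts c, incl. the empty cut} P_c(t) ⊗ R_c(t)`
(the empty cut contributes the term `𝟙 ⊗ t`). -/
noncomputable def deltaGen (t : RT) : HCK ⊗[ℚ] HCK :=
  X t ⊗ₜ[ℚ] 1 + ((allCuts t).map fun pr => pr.1 ⊗ₜ[ℚ] X pr.2).sum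

/-- The admissible-cut coproduct `Δ`, extended to `HCK` as an algebra homomorphism. -/
noncomputable def delta : HCK →ₐ[ℚ] HCK ⊗[ℚ] HCK := aeval deltaGen

/-- The grafting operator `B₊`, sending a forest (monomial) `t₁⋯t_n` to the tree
obtained by attaching the roots of `t₁,…,t_n` to a new root (and `B₊(𝟙) = •`). -/
noncomputable def Bplus : HCK →ₗ[ℚ] HCK :=
  (basisMonomials RT ℚ).constr ℚ
    fun m => (X (RT.node (Finsupp.toMultiset m).toList) : HCK)


noncomputable instance : DecidableEq RT := Classical.decEq _

lemma multisetX_prod (s : Multiset RT) :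
    ((s.map (X : RT → HCK)).prod) = monomial (Multiset.toFinsupp s) 1 := by
  induction s using Multiset.induction with
  | empty => simp
  | cons a s ih =>
      rw [Multiset.map_cons, Multiset.prod_cons, ih]
      have : (a ::ₘ s) = {a} + s := by simp [Multiset.singleton_add]
      rw [this, Multiset.toFinsupp_add, Multiset.toFinsupp_singleton]
      rw [X, monomial_mul, one_mul]

lemma listX_prod (L : List RT) :
    ((L.map (X : RT → HCK)).prod) = monomial (Multiset.toFinsupp ↑L) 1 := by
  rw [← multisetX_prod, Multiset.map_coe, Multiset.prod_coe]

lemma Bplus_listX (L : List RT) :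
    Bplus ((L.map (X : RT → HCK)).prod) = X (RT.node (↑L : Multiset RT).toList) := by
  rw [listX_prod]
  have hb : (monomial (Multiset.toFinsupp (↑L : Multiset RT)) (1:ℚ))
      = basisMonomials RT ℚ (Multiset.toFinsupp ↑L) := by
    simp [coe_basisMonomials]
  rw [hb, Bplus, Module.Basis.constr_basis, Multiset.toFinsupp_toMultiset]

lemma sum_flatMap' {M : Type*} [AddCommMonoid M] (L : List α) (h : α → List M) :
    (L.flatMap h).sum = (L.map fun a => (h a).sum).sum := by
  rw [List.flatMap, List.sum_flatten, List.map_map]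
  rfl

lemma key (l : List RT) :
    (l.map deltaGen).prod =
      ((childChoices l).map fun pr => pr.1 ⊗ₜ[ℚ] ((pr.2.map (X : RT → HCK)).prod)).sum := by
  induction l with
  | nil => simp [childChoices, Algebra.TensorProduct.one_def]
  | cons c rest ih =>
    rw [List.map_cons, List.prod_cons, ih, childChoices]
    rw [List.map_append, List.sum_append, deltaGen, add_mul]
    congr 1
    · rw [← List.sum_map_mul_left, List.map_map]
      refine congrArg List.sum (List.map_congr_left fun pr _ => ?_)
      simp [Algebra.TensorProduct.tmul_mul_tmul]
    · rw [← List.sum_map_mul_right, List.map_flatMap, sum_flatMap']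
      refine congrArg List.sum (List.map_congr_left fun qs _ => ?_)
      rw [List.map_map, ← List.sum_map_mul_left]
      refine congrArg List.sum (List.map_congr_left fun pr _ => ?_)
      simp [Algebra.TensorProduct.tmul_mul_tmul]

lemma Bplus_monomial (m : RT →₀ ℕ) :
    Bplus (monomial m 1) = X (RT.node (Finsupp.toMultiset m).toList) := by
  have hb : (monomial m (1:ℚ)) = basisMonomials RT ℚ m := by simp [coe_basisMonomials]
  rw [hb, Bplus, Module.Basis.constr_basis]

lemma main_monomial (m : RT →₀ ℕ) :
    delta (Bplus (monomial m 1)) =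
      TensorProduct.map LinearMap.id Bplus (delta (monomial m 1))
        + Bplus (monomial m 1) ⊗ₜ[ℚ] 1 := by
  set l : List RT := (Finsupp.toMultiset m).toList with hl
  have hmon : (monomial m (1:ℚ)) = (l.map (X : RT → HCK)).prod := by
    rw [listX_prod]
    congr 1
    rw [hl, Multiset.coe_toList, Finsupp.toMultiset_toFinsupp]
  have hdelta : delta (monomial m 1) = (l.map deltaGen).prod := by
    rw [hmon, map_list_prod, List.map_map]
    exact congrArg List.prod (List.map_congr_left fun t _ => by simp [delta])
  rw [Bplus_monomial, ← hl]
  rw [show delta (X (RT.node l)) = deltaGen (RT.node l) from aeval_X _ _]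
  rw [deltaGen, hdelta, key]
  rw [map_list_sum, List.map_map]
  rw [allCuts, List.map_map]
  rw [add_comm]
  congr 1
  exact congrArg List.sum (List.map_congr_left fun pr _ => by
    simp [Bplus_listX])
/-- In the Hopf algebra of rooted trees with the admissible-cut coproduct, the grafting
operator `B₊` satisfies the Hochschild 1-cocycle identity
`Δ ∘ B₊ = (id ⊗ B₊) ∘ Δ + B₊ ⊗ 𝟙`. -/
theorem stmt_11 (x : HCK) :
    delta (Bplus x) =
      TensorProduct.map LinearMap.id Bplus (delta x) + Bplus x ⊗ₜ[ℚ] 1 := by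
  let L : HCK →ₗ[ℚ] HCK ⊗[ℚ] HCK := delta.toLinearMap ∘ₗ Bplus
  let R : HCK →ₗ[ℚ] HCK ⊗[ℚ] HCK :=
    (TensorProduct.map LinearMap.id Bplus) ∘ₗ delta.toLinearMap
      + ((TensorProduct.mk ℚ HCK HCK).flip 1) ∘ₗ Bplus
  have hLR : L = R := by
    apply (basisMonomials RT ℚ).ext
    intro m
    have := main_monomial m
    simpa [L, R, coe_basisMonomials] using this
  have := LinearMap.congr_fun hLR x
  simpa [L, R] using this
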